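/- arXiv:2505.17751 — 3 statements merged into one kernel-verified Lean document; each statement's English description precedes it below -/
import Mathlib

section
/- Fix $0 < \delta < 1/2$ and let $s:[0,1]\to[0,1]$ be the hat function $s(t) = t/\delta$ for $t \le \delta$, $s(t)=1$ for $\delta < t \le 1-\delta$, and $s(t) = 1-(t-1+\delta)/\delta$ for $t > 1-\delta$. Define curves $f_d:[0,1]\to[0,1]^d$ recursively by $f_1(t)=t$ and $f_{d+1}(t) = (f_d(s(t)), t)$. Then for every $d \geq 1$, $f_d$ is continuous, and for every $z \in \{0,1\}^d$ there exists a closed interval $I \subseteq [0,1]$ of length $\delta^d$ such that $|f_d(t)_i - z_i| \leq \delta$ for all $t \in I$ and all $i = 1,\ldots,d$. -/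
/-!
Continuity is inherited through the recursion because `s` is continuous. For the intervals,
induct on `d`: `s` maps `[0, δ]` and `[1 - δ, 1]` affinely onto `[0, 1]`, so if `f_d` stays
near the vertex `z'` on `[a, b] ⊆ [0, 1]`, then `f_{d+1}` stays near `(z', 0)` on `[δa, δb]` and
near `(z', 1)` on `[1 - δb, 1 - δa]`, intervals that are `δ` times as long.
-/

noncomputable def hatS (δ : ℝ) (t : ℝ) : ℝ :=
  if t ≤ δ then t / δ else if t ≤ 1 - δ then 1 else 1 - (t - 1 + δ) / δ

noncomputable def curveF (δ : ℝ) : (d : ℕ) → ℝ → (Fin (d + 1) → ℝ)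
  | 0, t => fun _ => t
  | d + 1, t => Fin.snoc (curveF δ d (hatS δ t)) t

open Set

section

variable {δ : ℝ}

theorem hatS_of_le {t : ℝ} (ht : t ≤ δ) : hatS δ t = t / δ := if_pos ht

theorem hatS_of_one_sub_le (hδ0 : 0 < δ) (hδ1 : δ ≤ 1 / 2) {t : ℝ} (ht : 1 - δ ≤ t) :
    hatS δ t = (1 - t) / δ := by
  unfold hatS
  split_ifs with h₁ h₂
  · have : t = 1 / 2 := by linarith
    subst this
    congr 1
    norm_num
  · rw [le_antisymm h₂ ht]
    field_simp
    ring
  · field_simp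
    ring

theorem continuous_hatS (hδ0 : 0 < δ) (hδ1 : δ ≤ 1 / 2) : Continuous (hatS δ) := by
  refine Continuous.if_le (by fun_prop)
    (Continuous.if_le continuous_const (by fun_prop) continuous_id continuous_const ?_)
    continuous_id continuous_const ?_
  · intro t ht
    rw [ht]
    field_simp
    ring
  · intro t ht
    rw [ht, if_pos (by linarith)]
    field_simp

@[simp]
theorem curveF_zero (t : ℝ) (i : Fin 1) : curveF δ 0 t i = t := rfl

@[simp]
theorem curveF_succ_castSucc (d : ℕ) (t : ℝ) (i : Fin (d + 1)) :
    curveF δ (d + 1) t i.castSucc = curveF δ d (hatS δ t) i := by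
  simp [curveF]

@[simp]
theorem curveF_succ_last (d : ℕ) (t : ℝ) : curveF δ (d + 1) t (Fin.last (d + 1)) = t := by
  simp [curveF]

theorem continuous_curveF (hδ0 : 0 < δ) (hδ1 : δ ≤ 1 / 2) (d : ℕ) :
    Continuous (curveF δ d) := by
  induction d with
  | zero => exact continuous_pi fun _ => continuous_id
  | succ d ih =>
    refine continuous_pi fun i => ?_
    induction i using Fin.lastCases with
    | last => simpa using continuous_id'
    | cast i =>
      simp only [curveF_succ_castSucc]
      exact (continuous_apply i).comp (ih.comp (continuous_hatS hδ0 hδ1))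

theorem abs_curveF_succ_sub_snoc_zero_le (hδ0 : 0 < δ) {d : ℕ} {z : Fin (d + 1) → ℝ}
    {a b : ℝ} (ha : 0 ≤ a) (hb : b ≤ 1)
    (hz : ∀ t ∈ Icc a b, ∀ i, |curveF δ d t i - z i| ≤ δ) :
    ∀ t ∈ Icc (δ * a) (δ * b), ∀ i, |curveF δ (d + 1) t i - Fin.snoc (α := fun _ => ℝ) z 0 i| ≤ δ := by
  intro t ⟨hat, htb⟩ i
  have ht0 : 0 ≤ t := (mul_nonneg hδ0.le ha).trans hat
  have htδ : t ≤ δ := htb.trans (mul_le_of_le_one_right hδ0.le hb)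
  induction i using Fin.lastCases with
  | last => simpa [abs_of_nonneg ht0] using htδ
  | cast i =>
    rw [curveF_succ_castSucc, Fin.snoc_castSucc, hatS_of_le htδ]
    exact hz _ ⟨(le_div_iff₀' hδ0).2 hat, (div_le_iff₀' hδ0).2 htb⟩ i

theorem abs_curveF_succ_sub_snoc_one_le (hδ0 : 0 < δ) (hδ1 : δ ≤ 1 / 2) {d : ℕ}
    {z : Fin (d + 1) → ℝ} {a b : ℝ} (ha : 0 ≤ a) (hb : b ≤ 1)
    (hz : ∀ t ∈ Icc a b, ∀ i, |curveF δ d t i - z i| ≤ δ) :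
    ∀ t ∈ Icc (1 - δ * b) (1 - δ * a), ∀ i, |curveF δ (d + 1) t i - Fin.snoc (α := fun _ => ℝ) z 1 i| ≤ δ := by
  intro t ⟨hat, htb⟩ i
  have ht1 : t ≤ 1 := htb.trans (by linarith [mul_nonneg hδ0.le ha])
  have htδ : 1 - δ ≤ t := by linarith [mul_le_of_le_one_right hδ0.le hb]
  induction i using Fin.lastCases with
  | last =>
    rw [curveF_succ_last, Fin.snoc_last, abs_of_nonpos (by linarith)]
    linarith
  | cast i =>
    rw [curveF_succ_castSucc, Fin.snoc_castSucc, hatS_of_one_sub_le hδ0 hδ1 htδ]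
    exact hz _ ⟨(le_div_iff₀' hδ0).2 (by linarith), (div_le_iff₀' hδ0).2 (by linarith)⟩ i

theorem exists_Icc_abs_curveF_sub_le (hδ0 : 0 < δ) (hδ1 : δ ≤ 1 / 2) (d : ℕ)
    (z : Fin (d + 1) → ℝ) (hz : ∀ i, z i = 0 ∨ z i = 1) :
    ∃ a b : ℝ, a ≤ b ∧ b - a = δ ^ (d + 1) ∧ Icc a b ⊆ Icc (0 : ℝ) 1 ∧
      ∀ t ∈ Icc a b, ∀ i, |curveF δ d t i - z i| ≤ δ := by
  induction d with
  | zero =>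
    have hi : ∀ i : Fin 1, i = 0 := Fin.fin_one_eq_zero
    rcases hz 0 with h | h
    · refine ⟨0, δ, hδ0.le, by simp, Icc_subset_Icc le_rfl (by linarith), ?_⟩
      intro t ht i
      rw [hi i, h, curveF_zero, sub_zero, abs_of_nonneg ht.1]
      exact ht.2
    · refine ⟨1 - δ, 1, by linarith, by simp, Icc_subset_Icc (by linarith) le_rfl, ?_⟩
      intro t ht i
      rw [hi i, h, curveF_zero, abs_sub_comm, abs_of_nonneg (by linarith [ht.2])]
      linarith [ht.1]
  | succ d ih =>
    obtain ⟨z, c, rfl⟩ : ∃ z' c, Fin.snoc z' c = z :=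
      ⟨_, _, Fin.snoc_init_self _⟩
    obtain ⟨a, b, hab, hlen, hsub, hnear⟩ :=
      ih z fun i => by simpa using hz i.castSucc
    obtain ⟨ha, hb⟩ := (Icc_subset_Icc_iff hab).1 hsub
    have hδab : δ * a ≤ δ * b := mul_le_mul_of_nonneg_left hab hδ0.le
    have hδb : δ * b ≤ 1 := mul_le_one₀ (by linarith) (ha.trans hab) hb
    have hlen' : δ * b - δ * a = δ ^ (d + 2) := by rw [← mul_sub, hlen, ← pow_succ']
    rcases (by simpa using hz (Fin.last _) : c = 0 ∨ c = 1) with rfl | rfl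
    · refine ⟨δ * a, δ * b, hδab, hlen', (Icc_subset_Icc_iff hδab).2 ⟨by positivity, hδb⟩,
        abs_curveF_succ_sub_snoc_zero_le hδ0 ha hb hnear⟩
    · refine ⟨1 - δ * b, 1 - δ * a, by linarith, by linarith,
        (Icc_subset_Icc_iff (by linarith)).2 ⟨by linarith, by linarith [mul_nonneg hδ0.le ha]⟩,
        abs_curveF_succ_sub_snoc_one_le hδ0 hδ1 ha hb hnear⟩

end

/-- each curve `f_d` (here `curveF δ (d-1)`, `d ≥ 1`) is continuous on
`[0,1]` and for every vertex `z` of the cube there is a closed interval of length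
`δ^d` on which the curve stays within `δ` of `z` in every coordinate. -/
theorem stmt5 (δ : ℝ) (hδ0 : 0 < δ) (hδ1 : δ < 1 / 2) (d : ℕ) :
    ContinuousOn (curveF δ d) (Set.Icc (0 : ℝ) 1) ∧
    ∀ z : Fin (d + 1) → ℝ, (∀ i, z i = 0 ∨ z i = 1) →
      ∃ a b : ℝ, a ≤ b ∧ b - a = δ ^ (d + 1) ∧ Set.Icc a b ⊆ Set.Icc (0 : ℝ) 1 ∧
        ∀ t ∈ Set.Icc a b, ∀ i, |curveF δ d t i - z i| ≤ δ :=
  ⟨(continuous_curveF hδ0 hδ1.le d).continuousOn, exists_Icc_abs_curveF_sub_le hδ0 hδ1.le d⟩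
end

section
/- Let $d, n \in \mathbb{N}$ with $n \le d$, $1 \le p < \infty$, $0 < \delta < 1/2$, and $z \in \{-1,1\}^d$. Define $Q = \{x \in [-1,1]^d : \max_{j=1,\ldots,n}|x_j - z_j| \leq 1 - (1-2\delta)/n^{1/p}\}$, and let $B_{d,p} = \{x \in \mathbb{R}^d : \|x\|_p \leq 1\}$ with normalized Lebesgue measure $\mu$ (so $\mu(B_{d,p}) = 1$). Then $\mu(Q \cap B_{d,p}) \geq \delta^n (2\delta)^{d-n}$. -/
/-!
Let `A` be the part of the unit `p`-ball `B` whose first `n` coordinates are nonnegative. The ball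
is invariant under sign changes of coordinates, so `|B| ≤ 2ⁿ |A|`. With `c = (1 - 2δ) / n^{1/p}`,
the affine map `y ↦ z ⊙ (c 𝟙_{j<n} + 2δ y)` multiplies volumes by `(2δ)^d` and sends `A` into
`Q ∩ B`: by Minkowski the image has `p`-norm at most `c n^{1/p} + 2δ ≤ 1`, and on a coordinate
`j < n` it equals `z_j t` with `c ≤ t ≤ 1`, hence lies within `1 - c` of `z_j`.
-/

open MeasureTheory Finset
open scoped Pointwise

noncomputable def pNorm {ι : Type*} [Fintype ι] (p : ℝ) (x : ι → ℝ) : ℝ :=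
  (∑ i, |x i| ^ p) ^ (1 / p)

section pNorm

variable {ι : Type*} [Fintype ι] {p : ℝ}

theorem pNorm_congr_abs {x y : ι → ℝ} (h : ∀ i, |x i| = |y i|) : pNorm p x = pNorm p y := by
  simp only [pNorm, h]

theorem pNorm_add_le (hp : 1 ≤ p) (x y : ι → ℝ) : pNorm p (x + y) ≤ pNorm p x + pNorm p y :=
  Real.Lp_add_le univ x y hp

theorem pNorm_smul (hp : 0 < p) (a : ℝ) (x : ι → ℝ) : pNorm p (a • x) = |a| * pNorm p x := by
  have hsum : ∑ i, |(a • x) i| ^ p = |a| ^ p * ∑ i, |x i| ^ p := by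
    simp only [Pi.smul_apply, smul_eq_mul, abs_mul, mul_sum,
      Real.mul_rpow (abs_nonneg a) (abs_nonneg _)]
  rw [pNorm, pNorm, hsum, Real.mul_rpow (by positivity) (by positivity),
    ← Real.rpow_mul (abs_nonneg a), mul_one_div_cancel hp.ne', Real.rpow_one]

theorem abs_le_pNorm (hp : 0 < p) (x : ι → ℝ) (i : ι) : |x i| ≤ pNorm p x := by
  calc |x i| = (|x i| ^ p) ^ (1 / p) := by
        rw [← Real.rpow_mul (abs_nonneg _), mul_one_div_cancel hp.ne', Real.rpow_one]
    _ ≤ pNorm p x := by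
        unfold pNorm
        gcongr
        exact single_le_sum (f := fun j => |x j| ^ p) (fun j _ => by positivity) (mem_univ i)

theorem pNorm_indicator_one (hp : 0 < p) (S : Finset ι) :
    pNorm p ((S : Set ι).indicator 1) = (#S : ℝ) ^ (1 / p) := by
  classical
  have hterm : ∀ i, |(S : Set ι).indicator (1 : ι → ℝ) i| ^ p = if i ∈ S then 1 else 0 := by
    intro i
    by_cases hi : i ∈ S <;> simp [hi, hp.ne']
  simp only [pNorm, hterm, sum_boole, filter_mem_eq_inter, univ_inter]

end pNorm

section Volume

variable {ι : Type*} [Fintype ι]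

theorem volume_image_mul (w : ι → ℝ) (s : Set (ι → ℝ)) :
    volume ((w * ·) '' s) = ENNReal.ofReal |∏ i, w i| * volume s := by
  classical
  have hlin : (w * ·) = ⇑(Matrix.toLin' (Matrix.diagonal w)) := by
    ext y i
    simp [Matrix.toLin'_apply, Matrix.mulVec_diagonal]
  rw [hlin, Measure.addHaar_image_linearMap, LinearMap.det_toLin', Matrix.det_diagonal]

theorem volume_image_add_mul (u w : ι → ℝ) (s : Set (ι → ℝ)) :
    volume ((fun y => u + w * y) '' s) = ENNReal.ofReal |∏ i, w i| * volume s := by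
  have hcomp : (fun y => u + w * y) '' s = u +ᵥ (w * ·) '' s := by
    rw [← Set.image_vadd, Set.image_image]
    rfl
  rw [hcomp, measure_vadd, volume_image_mul]

theorem volume_le_two_mul_volume_inter_nonneg [DecidableEq ι] {t : Set (ι → ℝ)} (i : ι)
    (ht : ∀ y ∈ t, Function.update y i (-y i) ∈ t) :
    volume t ≤ 2 * volume (t ∩ {y | 0 ≤ y i}) := by
  set tpos := t ∩ {y | 0 ≤ y i}
  let reflect : (ι → ℝ) → (ι → ℝ) := (Function.update (1 : ι → ℝ) i (-1) * ·)
  have hreflect : ∀ y, reflect y = Function.update y i (-y i) := by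
    intro y; ext j
    by_cases hj : j = i <;> simp [reflect, hj]
  have hcover : t ⊆ tpos ∪ reflect '' tpos := by
    intro y hy
    rcases le_or_gt 0 (y i) with hyi | hyi
    · exact Or.inl ⟨hy, hyi⟩
    · refine Or.inr ⟨reflect y, ⟨by rw [hreflect]; exact ht y hy, ?_⟩, ?_⟩
      · simp [hreflect]; linarith
      · simp [hreflect]
  have hvol : volume (reflect '' tpos) = volume tpos := by
    rw [volume_image_mul]
    simp [prod_update_of_mem]
  calc volume t ≤ volume (tpos ∪ reflect '' tpos) := measure_mono hcover
    _ ≤ volume tpos + volume (reflect '' tpos) := measure_union_le _ _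
    _ = 2 * volume tpos := by rw [hvol, two_mul]

theorem volume_le_two_pow_card_mul_volume_inter_nonneg {s : Set (ι → ℝ)}
    (hs : ∀ x y, (∀ i, |x i| = |y i|) → x ∈ s → y ∈ s) (S : Finset ι) :
    volume s ≤ 2 ^ #S * volume (s ∩ {y | ∀ j ∈ S, 0 ≤ y j}) := by
  classical
  induction S using Finset.induction_on with
  | empty => simp
  | insert i S hi ih =>
    have hreflect : ∀ y ∈ s ∩ {y | ∀ j ∈ S, 0 ≤ y j},
        Function.update y i (-y i) ∈ s ∩ {y | ∀ j ∈ S, 0 ≤ y j} := by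
      rintro y ⟨hys, hyS⟩
      refine ⟨hs y _ (fun j => ?_) hys, fun j hj => ?_⟩
      · by_cases hj : j = i <;> simp [hj]
      · simpa [ne_of_mem_of_not_mem hj hi] using hyS j hj
    have hsplit : s ∩ {y | ∀ j ∈ S, 0 ≤ y j} ∩ {y | 0 ≤ y i}
        = s ∩ {y | ∀ j ∈ insert i S, 0 ≤ y j} := by
      ext y; simp only [Set.mem_inter_iff, Set.mem_ofPred_eq, mem_insert, forall_eq_or_imp]; tauto
    calc volume s ≤ 2 ^ #S * volume (s ∩ {y | ∀ j ∈ S, 0 ≤ y j}) := ih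
      _ ≤ 2 ^ #S * (2 * volume (s ∩ {y | ∀ j ∈ insert i S, 0 ≤ y j})) := by
        rw [← hsplit]
        gcongr
        exact volume_le_two_mul_volume_inter_nonneg i hreflect
      _ = 2 ^ #(insert i S) * volume (s ∩ {y | ∀ j ∈ insert i S, 0 ≤ y j}) := by
        rw [card_insert_of_notMem hi, pow_succ, mul_assoc]

end Volume

section Corner

variable {ι : Type*}

noncomputable def cornerMap (S : Finset ι) (z : ι → ℝ) (c a : ℝ) (y : ι → ℝ) : ι → ℝ :=
  z * (c • (S : Set ι).indicator 1 + a • y)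

theorem cornerMap_apply_of_mem {S : Finset ι} {j : ι} (hj : j ∈ S) (z : ι → ℝ) (c a : ℝ)
    (y : ι → ℝ) : cornerMap S z c a y j = z j * (c + a * y j) := by
  simp [cornerMap, hj]

variable [Fintype ι]

theorem volume_image_cornerMap (S : Finset ι) {z : ι → ℝ} (hz : ∀ i, |z i| = 1) (c : ℝ)
    {a : ℝ} (ha : 0 ≤ a) (s : Set (ι → ℝ)) :
    volume (cornerMap S z c a '' s) = ENNReal.ofReal (a ^ Fintype.card ι) * volume s := by
  have haffine : cornerMap S z c a = fun y => z * c • (S : Set ι).indicator 1 + (a • z) * y := by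
    ext y i
    simp only [cornerMap, Pi.mul_apply, Pi.add_apply, Pi.smul_apply, smul_eq_mul]
    ring
  rw [haffine, volume_image_add_mul, Finset.abs_prod]
  simp [abs_mul, hz, abs_of_nonneg ha]

theorem pNorm_cornerMap_le {p : ℝ} (hp : 1 ≤ p) (S : Finset ι) {z : ι → ℝ}
    (hz : ∀ i, |z i| = 1) (c a : ℝ) (y : ι → ℝ) :
    pNorm p (cornerMap S z c a y) ≤ |c| * (#S : ℝ) ^ (1 / p) + |a| * pNorm p y := by
  have hp0 : 0 < p := zero_lt_one.trans_le hp
  calc pNorm p (cornerMap S z c a y) = pNorm p (c • (S : Set ι).indicator 1 + a • y) :=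
        pNorm_congr_abs fun i => by simp only [cornerMap, Pi.mul_apply, abs_mul, hz, one_mul]
    _ ≤ pNorm p (c • (S : Set ι).indicator 1) + pNorm p (a • y) := pNorm_add_le hp _ _
    _ = |c| * (#S : ℝ) ^ (1 / p) + |a| * pNorm p y := by
        rw [pNorm_smul hp0, pNorm_smul hp0, pNorm_indicator_one hp0]

theorem mapsTo_cornerMap {p δ : ℝ} (hp : 1 ≤ p) (hδ0 : 0 < δ) (hδ1 : δ ≤ 1 / 2) (S : Finset ι)
    {z : ι → ℝ} (hz : ∀ i, |z i| = 1) :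
    Set.MapsTo (cornerMap S z ((1 - 2 * δ) / (#S : ℝ) ^ (1 / p)) (2 * δ))
      ({y | pNorm p y ≤ 1} ∩ {y | ∀ j ∈ S, 0 ≤ y j})
      ({x | (∀ i, x i ∈ Set.Icc (-1 : ℝ) 1) ∧
        ∀ j ∈ S, |x j - z j| ≤ 1 - (1 - 2 * δ) / (#S : ℝ) ^ (1 / p)} ∩ {x | pNorm p x ≤ 1}) := by
  rintro y ⟨hy : pNorm p y ≤ 1, hyS⟩
  set c := (1 - 2 * δ) / (#S : ℝ) ^ (1 / p)
  set x := cornerMap S z c (2 * δ) y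
  have hp0 : 0 < p := zero_lt_one.trans_le hp
  have hc : 0 ≤ c := div_nonneg (by linarith) (by positivity)
  have hcS : c * (#S : ℝ) ^ (1 / p) ≤ 1 - 2 * δ := by
    rcases eq_or_ne ((#S : ℝ) ^ (1 / p)) 0 with h | h
    · rw [h, mul_zero]; linarith
    · rw [div_mul_cancel₀ _ h]
  have hx : pNorm p x ≤ 1 :=
    calc pNorm p x ≤ |c| * (#S : ℝ) ^ (1 / p) + |2 * δ| * pNorm p y :=
          pNorm_cornerMap_le hp S hz c (2 * δ) y
      _ ≤ (1 - 2 * δ) + 2 * δ * 1 := by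
          rw [abs_of_nonneg hc, abs_of_pos (by positivity)]
          gcongr
      _ = 1 := by ring
  have hx_abs : ∀ i, |x i| ≤ 1 := fun i => (abs_le_pNorm hp0 x i).trans hx
  refine ⟨⟨fun i => abs_le.mp (hx_abs i), fun j hj => ?_⟩, hx⟩
  have ht : 0 ≤ c + 2 * δ * y j := by have := hyS j hj; positivity
  have hxj : x j = z j * (c + 2 * δ * y j) := cornerMap_apply_of_mem hj z c (2 * δ) y
  have ht1 : c + 2 * δ * y j ≤ 1 := by
    simpa [hxj, abs_mul, hz, abs_of_nonneg ht] using hx_abs j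
  calc |x j - z j| = |z j| * |c + 2 * δ * y j - 1| := by rw [hxj, ← abs_mul]; ring_nf
    _ = 1 - (c + 2 * δ * y j) := by rw [hz, one_mul, abs_of_nonpos (by linarith)]; ring
    _ ≤ 1 - c := by have := hyS j hj; nlinarith

end Corner

theorem ENNReal.ofReal_pow_mul_two_mul_pow_sub_mul_two_pow {δ : ℝ} (hδ : 0 ≤ δ) {k m : ℕ}
    (hkm : k ≤ m) :
    ENNReal.ofReal (δ ^ k * (2 * δ) ^ (m - k)) * 2 ^ k = ENNReal.ofReal ((2 * δ) ^ m) := by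
  rw [← ENNReal.ofReal_ofNat 2, ← ENNReal.ofReal_pow zero_le_two,
    ← ENNReal.ofReal_mul (by positivity)]
  congr 1
  rw [← Nat.sub_add_cancel hkm, pow_add, mul_pow, Nat.add_sub_cancel]
  ring

theorem volume_corner_inter_pBall {ι : Type*} [Fintype ι] (S : Finset ι) {p δ : ℝ} (hp : 1 ≤ p)
    (hδ0 : 0 < δ) (hδ1 : δ ≤ 1 / 2) {z : ι → ℝ} (hz : ∀ i, |z i| = 1) :
    ENNReal.ofReal (δ ^ #S * (2 * δ) ^ (Fintype.card ι - #S)) *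
        volume {x : ι → ℝ | pNorm p x ≤ 1} ≤
      volume ({x | (∀ i, x i ∈ Set.Icc (-1 : ℝ) 1) ∧
        ∀ j ∈ S, |x j - z j| ≤ 1 - (1 - 2 * δ) / (#S : ℝ) ^ (1 / p)} ∩ {x | pNorm p x ≤ 1}) := by
  set B : Set (ι → ℝ) := {x | pNorm p x ≤ 1}
  set A := B ∩ {y | ∀ j ∈ S, 0 ≤ y j}
  have hB : ∀ x y, (∀ i, |x i| = |y i|) → x ∈ B → y ∈ B := fun x y h hx =>
    (pNorm_congr_abs h).symm.trans_le hx
  calc ENNReal.ofReal (δ ^ #S * (2 * δ) ^ (Fintype.card ι - #S)) * volume B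
      ≤ ENNReal.ofReal (δ ^ #S * (2 * δ) ^ (Fintype.card ι - #S)) * (2 ^ #S * volume A) := by
        gcongr
        exact volume_le_two_pow_card_mul_volume_inter_nonneg hB S
    _ = ENNReal.ofReal ((2 * δ) ^ Fintype.card ι) * volume A := by
        rw [← mul_assoc,
          ENNReal.ofReal_pow_mul_two_mul_pow_sub_mul_two_pow hδ0.le S.card_le_univ]
    _ = volume (cornerMap S z ((1 - 2 * δ) / (#S : ℝ) ^ (1 / p)) (2 * δ) '' A) :=
        (volume_image_cornerMap S hz _ (by positivity) A).symm
    _ ≤ _ := measure_mono (mapsTo_cornerMap hp hδ0 hδ1 S hz).image_subset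

theorem stmt7_general (d n : ℕ) (hnd : n ≤ d) (p : ℝ) (hp : 1 ≤ p)
    (δ : ℝ) (hδ0 : 0 < δ) (hδ1 : δ < 1 / 2) (z : Fin d → ℝ)
    (hz : ∀ i, z i = -1 ∨ z i = 1)
    (Q : Set (Fin d → ℝ))
    (hQ : Q = {x | (∀ i, x i ∈ Set.Icc (-1 : ℝ) 1) ∧
      ∀ j : Fin d, (j : ℕ) < n → |x j - z j| ≤ 1 - (1 - 2 * δ) / (n : ℝ) ^ (1 / p)})
    (B : Set (Fin d → ℝ))
    (hB : B = {x | (∑ i, |x i| ^ p) ^ (1 / p) ≤ 1}) :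
    ENNReal.ofReal (δ ^ n * (2 * δ) ^ (d - n)) * volume B ≤ volume (Q ∩ B) := by
  have hz_abs : ∀ i, |z i| = 1 := fun i => by rcases hz i with h | h <;> simp [h]
  have hcard : #{j : Fin d | (j : ℕ) < n} = n := by simp [Fin.card_filter_val_lt, hnd]
  have key := volume_corner_inter_pBall {j : Fin d | (j : ℕ) < n} hp hδ0 hδ1.le hz_abs
  rw [hcard, Fintype.card_fin] at key
  have hQS : Q = {x | (∀ i, x i ∈ Set.Icc (-1 : ℝ) 1) ∧
      ∀ j ∈ ({j : Fin d | (j : ℕ) < n} : Finset (Fin d)),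
        |x j - z j| ≤ 1 - (1 - 2 * δ) / (n : ℝ) ^ (1 / p)} := by
    simp only [hQ, mem_filter_univ]
  rw [hQS, hB]
  exact key

/-- the corner region `Q` meets the `p`-ball in relative volume at
least `δ^n (2δ)^{d-n}`. -/
theorem stmt7 (d n : ℕ) (hn : 1 ≤ n) (hnd : n ≤ d) (p : ℝ) (hp : 1 ≤ p)
    (δ : ℝ) (hδ0 : 0 < δ) (hδ1 : δ < 1 / 2) (z : Fin d → ℝ)
    (hz : ∀ i, z i = -1 ∨ z i = 1)
    (Q : Set (Fin d → ℝ))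
    (hQ : Q = {x | (∀ i, x i ∈ Set.Icc (-1 : ℝ) 1) ∧
      ∀ j : Fin d, (j : ℕ) < n → |x j - z j| ≤ 1 - (1 - 2 * δ) / (n : ℝ) ^ (1 / p)})
    (B : Set (Fin d → ℝ))
    (hB : B = {x | (∑ i, |x i| ^ p) ^ (1 / p) ≤ 1}) :
    ENNReal.ofReal (δ ^ n * (2 * δ) ^ (d - n)) * volume B ≤ volume (Q ∩ B) :=
  stmt7_general d n hnd p hp δ hδ0 hδ1 z hz Q hQ B hB
end

section
/- Let $\alpha$ be a CNF formula over variables $x_1,\ldots,x_n$ and let $r:\mathbb{R}\to[0,1]$ be continuous with $r(x)=0$ for $x \le 1/2$ and $r(x)=1$ for $x \ge 1-\delta$, where $0<\delta<1/2$. Define $F_\alpha:[0,1]^n\to\mathbb{R}$ by $F_\alpha(x) = r\big(1 + \sum_{C\in\alpha}\big(r\big(\sum_{(i,\gamma)\in C} r(\gamma x_i)\big) - 1\big)\big)$, where $\gamma x_i = x_i$ for positive literals and $\gamma x_i = 1 - x_i$ for negative literals. If $\alpha$ is unsatisfiable, then $F_\alpha(x) = 0$ for all $x \in [0,1]^n$.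 If $z \in \{0,1\}^n$ satisfies $\alpha$, then $F_\alpha(x) = 1$ for all $x$ with $\max_i |x_i - z_i| \leq \delta$. -/
/-- Value of a literal applied to a real number: identity or `1 - ·`. -/
def litVal (γ : Bool) (t : ℝ) : ℝ := if γ then t else 1 - t

/-- Value of a literal applied to a Boolean. -/
def litB (γ : Bool) (b : Bool) : Bool := if γ then b else !b

/-- An assignment satisfies a CNF formula if every clause contains a true literal. -/
def SatCNF {n : ℕ} (α : Finset (Finset (Fin n × Bool))) (z : Fin n → Bool) : Prop :=
  ∀ C ∈ α, ∃ l ∈ C, litB l.2 (z l.1) = true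

/-- The function `F_α` associated with a CNF formula and an activation-shape `r`. -/
noncomputable def Falpha {n : ℕ} (r : ℝ → ℝ) (α : Finset (Finset (Fin n × Bool)))
    (x : Fin n → ℝ) : ℝ :=
  r (1 + ∑ C ∈ α, (r (∑ l ∈ C, r (litVal l.2 (x l.1))) - 1))

/-!
Round each coordinate of `x` to the Boolean `x i > 1/2`. If `α` is unsatisfiable, some clause is
falsified by this rounding, so all its literals have value `≤ 1/2` and the clause evaluates to
`r 0 = 0`; since every other clause contributes `≤ 0` to the outer sum, the outer argument is
`≤ 0` and `F_α x = 0`. Near a satisfying assignment every clause has a literal of value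
`≥ 1 - δ`, so every clause evaluates to `1`, the outer argument is exactly `1`, and `F_α x = 1`.
-/

open Finset

lemma litVal_le_half_of_litB_eq_false {γ : Bool} {t : ℝ}
    (h : litB γ (decide (1 / 2 < t)) = false) : litVal γ t ≤ 1 / 2 := by
  cases γ <;> simp only [litB, litVal, Bool.false_eq_true, ↓reduceIte, Bool.not_eq_false',
    decide_eq_true_eq, decide_eq_false_iff_not, not_lt] at h ⊢ <;> linarith

lemma one_sub_le_litVal_of_litB_eq_true {γ b : Bool} {t δ : ℝ}
    (hnear : |t - (if b then 1 else 0)| ≤ δ) (h : litB γ b = true) : 1 - δ ≤ litVal γ t := by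
  cases γ <;> cases b <;> simp [litB, litVal] at h hnear ⊢ <;> linarith [abs_le.mp hnear]

lemma one_add_sum_sub_one_nonpos {ι : Type*} {s : Finset ι} {c : ι → ℝ} {i : ι}
    (hc : ∀ j ∈ s, c j ≤ 1) (hi : i ∈ s) (hci : c i = 0) : 1 + ∑ j ∈ s, (c j - 1) ≤ 0 := by
  classical
  have hrest : ∑ j ∈ s.erase i, (c j - 1) ≤ 0 :=
    sum_nonpos fun j hj => by linarith [hc j (mem_of_mem_erase hj)]
  rw [← add_sum_erase s _ hi, hci]
  linarith

section Falpha

variable {n : ℕ} {r : ℝ → ℝ} {α : Finset (Finset (Fin n × Bool))} {x : Fin n → ℝ}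

lemma Falpha_eq_zero_of_clause_le_half (hr_le_one : ∀ t, r t ≤ 1)
    (hr0 : ∀ t : ℝ, t ≤ 1 / 2 → r t = 0) {C : Finset (Fin n × Bool)} (hC : C ∈ α)
    (hlit : ∀ l ∈ C, litVal l.2 (x l.1) ≤ 1 / 2) : Falpha r α x = 0 := by
  have hclause : r (∑ l ∈ C, r (litVal l.2 (x l.1))) = 0 := by
    rw [sum_eq_zero fun l hl => hr0 _ (hlit l hl)]
    exact hr0 0 (by norm_num)
  have hsum := one_add_sum_sub_one_nonpos (c := fun D => r (∑ l ∈ D, r (litVal l.2 (x l.1))))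
    (fun _ _ => hr_le_one _) hC hclause
  exact hr0 _ (by linarith)

lemma Falpha_eq_one_of_forall_exists_lit {δ : ℝ} (hδ0 : 0 ≤ δ) (hr_nonneg : ∀ t, 0 ≤ r t)
    (hr1 : ∀ t : ℝ, 1 - δ ≤ t → r t = 1)
    (hlit : ∀ C ∈ α, ∃ l ∈ C, 1 - δ ≤ litVal l.2 (x l.1)) : Falpha r α x = 1 := by
  have hclause : ∀ C ∈ α, r (∑ l ∈ C, r (litVal l.2 (x l.1))) = 1 := by
    intro C hC
    obtain ⟨l, hl, hval⟩ := hlit C hC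
    have hle : r (litVal l.2 (x l.1)) ≤ ∑ l' ∈ C, r (litVal l'.2 (x l'.1)) :=
      single_le_sum (f := fun l' : Fin n × Bool => r (litVal l'.2 (x l'.1)))
        (fun _ _ => hr_nonneg _) hl
    exact hr1 _ (by linarith [hr1 _ hval])
  have hsum : ∑ C ∈ α, (r (∑ l ∈ C, r (litVal l.2 (x l.1))) - 1) = 0 :=
    sum_eq_zero fun C hC => by rw [hclause C hC, sub_self]
  rw [Falpha, hsum]
  exact hr1 _ (by linarith)

end Falpha

theorem stmt18_general {n : ℕ} (δ : ℝ) (hδ0 : 0 < δ)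
    (r : ℝ → ℝ) (hr01 : ∀ x, r x ∈ Set.Icc (0 : ℝ) 1)
    (hr0 : ∀ x : ℝ, x ≤ 1 / 2 → r x = 0) (hr1 : ∀ x : ℝ, 1 - δ ≤ x → r x = 1)
    (α : Finset (Finset (Fin n × Bool))) :
    ((¬ ∃ z : Fin n → Bool, SatCNF α z) →
      ∀ x : Fin n → ℝ, (∀ i, x i ∈ Set.Icc (0 : ℝ) 1) → Falpha r α x = 0) ∧
    (∀ z : Fin n → Bool, SatCNF α z →
      ∀ x : Fin n → ℝ, (∀ i, x i ∈ Set.Icc (0 : ℝ) 1) →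
        (∀ i, |x i - (if z i then 1 else 0)| ≤ δ) → Falpha r α x = 1) := by
  constructor
  · intro hunsat x _
    obtain ⟨C, hC, hfalse⟩ : ∃ C ∈ α, ∀ l ∈ C, litB l.2 (decide (1 / 2 < x l.1)) = false := by
      simpa [SatCNF] using fun h => hunsat ⟨_, h⟩
    exact Falpha_eq_zero_of_clause_le_half (fun t => (hr01 t).2) hr0 hC
      fun l hl => litVal_le_half_of_litB_eq_false (hfalse l hl)
  · intro z hsat x _ hnear
    refine Falpha_eq_one_of_forall_exists_lit hδ0.le (fun t => (hr01 t).1) hr1 fun C hC => ?_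
    obtain ⟨l, hl, htrue⟩ := hsat C hC
    exact ⟨l, hl, one_sub_le_litVal_of_litB_eq_true (hnear l.1) htrue⟩

/-- `F_α` vanishes on the cube if `α` is unsatisfiable, and equals `1`
near any satisfying assignment. -/
theorem stmt18 {n : ℕ} (δ : ℝ) (hδ0 : 0 < δ) (hδ1 : δ < 1 / 2)
    (r : ℝ → ℝ) (hrc : Continuous r) (hr01 : ∀ x, r x ∈ Set.Icc (0 : ℝ) 1)
    (hr0 : ∀ x : ℝ, x ≤ 1 / 2 → r x = 0) (hr1 : ∀ x : ℝ, 1 - δ ≤ x → r x = 1)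
    (α : Finset (Finset (Fin n × Bool))) :
    ((¬ ∃ z : Fin n → Bool, SatCNF α z) →
      ∀ x : Fin n → ℝ, (∀ i, x i ∈ Set.Icc (0 : ℝ) 1) → Falpha r α x = 0) ∧
    (∀ z : Fin n → Bool, SatCNF α z →
      ∀ x : Fin n → ℝ, (∀ i, x i ∈ Set.Icc (0 : ℝ) 1) →
        (∀ i, |x i - (if z i then 1 else 0)| ≤ δ) → Falpha r α x = 1) :=
  stmt18_general δ hδ0 r hr01 hr0 hr1 α
end
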